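/- arXiv:0805.2907 — 4 statements merged into one kernel-verified Lean document; each statement's English description precedes it below -/
import Mathlib

section
/- If X is a finite list of nonzero vectors in a lattice Γ generating a pointed cone and spanning V = Γ ⊗ ℝ, then the partition function P_X satisfies the difference equation ∇_X P_X = δ₀, where ∇_X is the product of the operators ∇_a over a ∈ X and δ₀ is the function equal to 1 at 0 and 0 elsewhere. -/
open Function

attribute [local instance] Classical.propDecidable

noncomputable section

/-- The lattice `Γ = ι → ℤ`. -/
abbrev ZLat (ι : Type*) := ι → ℤ
/-- The ambient real vector space `V = Γ ⊗ ℝ = ι → ℝ`. -/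
abbrev Amb (ι : Type*) := ι → ℝ

variable {ι : Type*} [Fintype ι]

/-- Embedding of the lattice into the ambient space. -/
def castV (γ : ZLat ι) : Amb ι := fun i => (γ i : ℝ)

/-- Standard pairing on `V`. -/
def dotR (u v : Amb ι) : ℝ := ∑ i, u i * v i

/-- The difference operator `∇ₐ`. -/
def nab (a : ZLat ι) (f : ZLat ι → ℤ) : ZLat ι → ℤ := fun b => f b - f (b - a)

/-- `∇_Y = ∏_{a ∈ Y} ∇ₐ` for a list `Y`. -/
def nabL (Y : List (ZLat ι)) (f : ZLat ι → ℤ) : ZLat ι → ℤ := Y.foldr nab f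

/-- Delta function at `0`. -/
def delta0 : ZLat ι → ℤ := fun γ => if γ = 0 then 1 else 0

/-- The partition function of a list `Y`: the number of ways of writing `γ` as a
nonnegative integral combination of the entries of `Y`. -/
def partFn (Y : List (ZLat ι)) : ZLat ι → ℤ :=
  fun γ => Nat.card {k : Fin Y.length → ℕ // ∑ i, (k i : ℤ) • Y.get i = γ}

/-- The cone `C(Y)` of nonnegative real combinations of the entries of `Y`. -/
def coneC (Y : List (ZLat ι)) : Set (Amb ι) :=
  {v | ∃ t : Fin Y.length → ℝ, (∀ i, 0 ≤ t i) ∧ v = ∑ i, t i • castV (Y.get i)}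

/-- `C(Y)` is pointed: it contains no line. -/
def PointedList (Y : List (ZLat ι)) : Prop :=
  ∀ v ∈ coneC Y, -v ∈ coneC Y → v = 0

/-- The zonotope `B(Y) = {∑ tᵢ aᵢ : 0 ≤ tᵢ ≤ 1}`. -/
def zono (Y : List (ZLat ι)) : Set (Amb ι) :=
  {v | ∃ t : Fin Y.length → ℝ, (∀ i, 0 ≤ t i ∧ t i ≤ 1) ∧ v = ∑ i, t i • castV (Y.get i)}

/-- The real span of a list of lattice vectors. -/
def spanOf (Y : List (ZLat ι)) : Submodule ℝ (Amb ι) :=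
  Submodule.span ℝ (castV '' {a | a ∈ Y})

/-- A subspace is rational (relative to `X`) if it is spanned by a sublist of `X`. -/
def IsRational (X : List (ZLat ι)) (r : Submodule ℝ (Amb ι)) : Prop :=
  ∃ Y : List (ZLat ι), (∀ a ∈ Y, a ∈ X) ∧ r = spanOf Y

/-- The sublist `X ∩ r`. -/
def inSub (X : List (ZLat ι)) (r : Submodule ℝ (Amb ι)) : List (ZLat ι) :=
  X.filter (fun a => decide (castV a ∈ r))

/-- The sublist `X \ r`. -/
def outSub (X : List (ZLat ι)) (r : Submodule ℝ (Amb ι)) : List (ZLat ι) :=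
  X.filter (fun a => decide (castV a ∉ r))

/-- The operator `∇_{X \ r}`. -/
def nabOut (X : List (ZLat ι)) (r : Submodule ℝ (Amb ι)) (f : ZLat ι → ℤ) : ZLat ι → ℤ :=
  nabL (outSub X r) f

/-- The space `𝓕(X)`: `∇_{X\r} f` is supported on `Γ ∩ r` for every rational `r`. -/
def memF (X : List (ZLat ι)) (f : ZLat ι → ℤ) : Prop :=
  ∀ r, IsRational X r → support (nabOut X r f) ⊆ {γ | castV γ ∈ r}

/-- The Dahmen–Micchelli space of a list `Y` (inside its span): `f` is killed by
`∇_{Y \ H}` for every rational hyperplane `H` of the span of `Y`. -/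
def memDM (Y : List (ZLat ι)) (f : ZLat ι → ℤ) : Prop :=
  ∀ H, IsRational Y H → Module.finrank ℝ H + 1 = Module.finrank ℝ (spanOf Y) →
    nabOut Y H f = 0

/-- `𝓕(X ∩ r)`, viewed as functions on `Γ` supported on `Γ ∩ r`. -/
def memFrel (X : List (ZLat ι)) (r : Submodule ℝ (Amb ι)) (g : ZLat ι → ℤ) : Prop :=
  support g ⊆ {γ | castV γ ∈ r} ∧ memF (inSub X r) g

/-- `DM(X ∩ r)`, viewed as functions on `Γ` supported on `Γ ∩ r`. -/
def memDMrel (X : List (ZLat ι)) (r : Submodule ℝ (Amb ι)) (g : ZLat ι → ℤ) : Prop :=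
  support g ⊆ {γ | castV γ ∈ r} ∧ memDM (inSub X r) g

/-- `u` is a regular vector for `X \ r`:  `u ∈ r^⊥` and `⟨u, a⟩ ≠ 0` for all `a ∈ X \ r`.
It determines the regular face `F` containing it. -/
def Reg (X : List (ZLat ι)) (r : Submodule ℝ (Amb ι)) (u : Amb ι) : Prop :=
  (∀ v ∈ r, dotR u v = 0) ∧ ∀ a ∈ X, castV a ∉ r → dotR u (castV a) ≠ 0

/-- The sublist `B ⊆ X \ r` of elements negative on `u`. -/
def negPart (X : List (ZLat ι)) (r : Submodule ℝ (Amb ι)) (u : Amb ι) : List (ZLat ι) :=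
  (outSub X r).filter (fun a => decide (dotR u (castV a) < 0))

/-- The list `[A, -B]`: entries of `X \ r`, with sign flipped on the part negative on `u`. -/
def signedOut (X : List (ZLat ι)) (r : Submodule ℝ (Amb ι)) (u : Amb ι) : List (ZLat ι) :=
  (outSub X r).map (fun a => if 0 < dotR u (castV a) then a else -a)

/-- The special function `𝓟_{X\r}^F` for the face `F ∋ u`:
`(-1)^{|B|} τ_{-∑_{b∈B} b} (∏_{a∈A} ∑_k δ_{ka}) * (∏_{b∈B} ∑_k δ_{-kb})`. -/
def PF (X : List (ZLat ι)) (r : Submodule ℝ (Amb ι)) (u : Amb ι) : ZLat ι → ℤ :=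
  fun γ => (-1) ^ (negPart X r u).length *
    partFn (signedOut X r u) (γ + (negPart X r u).sum)

/-- The support region `-∑_{b∈B} b + C(A, -B)` of `𝓟_{X\r}^F`, as a subset of `Γ`. -/
def PFsupp (X : List (ZLat ι)) (r : Submodule ℝ (Amb ι)) (u : Amb ι) : Set (ZLat ι) :=
  {γ | castV (γ + (negPart X r u).sum) ∈ coneC (signedOut X r u)}

/-- Convolution of two functions on the lattice. -/
def conv (f g : ZLat ι → ℤ) : ZLat ι → ℤ := fun γ => ∑ᶠ μ, f (γ - μ) * g μ

/-- The union of all rational hyperplanes (inside the span of `Y`). -/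
def hyperUnion (Y : List (ZLat ι)) : Set (Amb ι) :=
  {v | ∃ H, IsRational Y H ∧ Module.finrank ℝ H + 1 = Module.finrank ℝ (spanOf Y) ∧ v ∈ H}

/-- A tope for `Y`: a connected component of the complement (in the span of `Y`) of the
union of the hyperplanes spanned by sublists of `Y`. -/
def IsTope (Y : List (ZLat ι)) (τ : Set (Amb ι)) : Prop :=
  ∃ v ∈ (spanOf Y : Set (Amb ι)) \ hyperUnion Y,
    τ = connectedComponentIn ((spanOf Y : Set (Amb ι)) \ hyperUnion Y) v

/-- The set of singular vectors: the union of the cones `C(Y)` over sublists `Y` of `X`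
not spanning `V`. -/
def singSet (X : List (ZLat ι)) : Set (Amb ι) :=
  {v | ∃ Y : List (ZLat ι), (∀ a ∈ Y, a ∈ X) ∧ spanOf Y ≠ ⊤ ∧ v ∈ coneC Y}

/-- A big cell: a connected component of the complement of the set of singular vectors. -/
def IsBigCell (X : List (ZLat ι)) (c : Set (Amb ι)) : Prop :=
  ∃ v ∈ (singSet X)ᶜ, c = connectedComponentIn (singSet X)ᶜ v

/-- Minkowski difference of sets, `A - B`. -/
def sdiffSet (A B : Set (Amb ι)) : Set (Amb ι) := {x | ∃ a ∈ A, ∃ b ∈ B, x = a - b}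

/-!
Pointedness of `C(X)` keeps `0` out of the convex hull of `X`, so Hahn–Banach gives a linear
form `φ` positive on every `a ∈ X`; consequently every `γ` has only finitely many
representations. Sorting the representations of `γ` by `a :: Y` according to whether the
coefficient of `a` vanishes gives `P_{a :: Y}(γ) = P_{a :: Y}(γ - a) + P_Y(γ)`, that is
`∇_a P_{a :: Y} = P_Y`. As the operators `∇_a` commute, induction on `X` reduces the claim to
`P_[] = δ₀`.
-/

section Representations

variable {G : Type*} [AddCommGroup G]

def repSet (Y : List G) (γ : G) : Set (Fin Y.length → ℕ) :=
  {k | ∑ i, (k i : ℤ) • Y.get i = γ}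

def natProdSubtypeEquiv {β : Type*} (P : ℕ × β → Prop) :
    {p // P p} ≃ {b // P (0, b)} ⊕ {p : ℕ × β // P (p.1 + 1, p.2)} where
  toFun
    | ⟨(0, b), h⟩ => .inl ⟨b, h⟩
    | ⟨(n + 1, b), h⟩ => .inr ⟨(n, b), h⟩
  invFun := Sum.elim (fun b => ⟨(0, b.1), b.2⟩) (fun p => ⟨(p.1.1 + 1, p.1.2), p.2⟩)
  left_inv := by rintro ⟨⟨_ | n, b⟩, h⟩ <;> rfl
  right_inv := by rintro (⟨b, h⟩ | ⟨⟨n, b⟩, h⟩) <;> rfl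

def repSetConsEquiv (a : G) (Y : List G) (γ : G) :
    {p : ℕ × (Fin Y.length → ℕ) // (p.1 : ℤ) • a + ∑ i, (p.2 i : ℤ) • Y.get i = γ} ≃
      repSet (a :: Y) γ :=
  (Fin.consEquiv fun _ => ℕ).subtypeEquiv fun p => by
    simp [repSet, Fin.sum_univ_succ, Fin.consEquiv]

/-- A nonzero coefficient of `a` is lowered by one, giving a representation of `γ - a`. -/
def repSetConsSplit (a : G) (Y : List G) (γ : G) :
    repSet (a :: Y) γ ≃ repSet (a :: Y) (γ - a) ⊕ repSet Y γ :=
  (repSetConsEquiv a Y γ).symm.trans <| (natProdSubtypeEquiv _).trans <|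
    (Equiv.sumComm _ _).trans <| Equiv.sumCongr
      ((Equiv.subtypeEquivRight fun p => by
        rw [eq_sub_iff_add_eq, Nat.cast_succ, add_smul, one_smul, add_right_comm]).trans
        (repSetConsEquiv a Y (γ - a)))
      (Equiv.subtypeEquivRight fun k => by simp [repSet])

theorem repSet_finite_of_pos (Y : List G) (φ : G →+ ℝ) (hφ : ∀ a ∈ Y, 0 < φ a) (γ : G) :
    (repSet Y γ).Finite := by
  refine (Set.finite_Iic fun j => ⌈φ γ / φ (Y.get j)⌉₊).subset fun k hk j => ?_
  have hpos : ∀ i, 0 < φ (Y.get i) := fun i => hφ _ (Y.get_mem i)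
  have hsum : ∑ i, (k i : ℝ) * φ (Y.get i) = φ γ := by
    rw [← hk, map_sum]
    simp
  have hle : (k j : ℝ) * φ (Y.get j) ≤ φ γ :=
    hsum ▸ Finset.single_le_sum (fun i _ => mul_nonneg (Nat.cast_nonneg _) (hpos i).le)
      (Finset.mem_univ j)
  exact_mod_cast ((le_div_iff₀ (hpos j)).2 hle).trans (Nat.le_ceil _)

end Representations

theorem partFn_nil : partFn ([] : List (ZLat ι)) = delta0 := by
  funext γ
  by_cases h : γ = 0 <;> simp [partFn, delta0, h, eq_comm]

omit [Fintype ι] in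
theorem partFn_cons_of_finite {a : ZLat ι} {Y : List (ZLat ι)} {γ : ZLat ι}
    (h : (repSet (a :: Y) γ).Finite) :
    partFn (a :: Y) γ = partFn (a :: Y) (γ - a) + partFn Y γ := by
  have := h.to_subtype
  have := Finite.of_equiv _ (repSetConsSplit a Y γ)
  have : Finite (repSet (a :: Y) (γ - a)) := Finite.sum_left (repSet Y γ)
  have : Finite (repSet Y γ) := Finite.sum_right (repSet (a :: Y) (γ - a))
  change (Nat.card (repSet (a :: Y) γ) : ℤ) =
    Nat.card (repSet (a :: Y) (γ - a)) + Nat.card (repSet Y γ)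
  rw [Nat.card_congr (repSetConsSplit a Y γ), Nat.card_sum, Nat.cast_add]

omit [Fintype ι] in
theorem nab_comm (a b : ZLat ι) (f : ZLat ι → ℤ) : nab a (nab b f) = nab b (nab a f) := by
  funext γ
  simp only [nab, sub_right_comm γ a b]
  ring

omit [Fintype ι] in
theorem nab_nabL (a : ZLat ι) (Y : List (ZLat ι)) (f : ZLat ι → ℤ) :
    nab a (nabL Y f) = nabL Y (nab a f) := by
  induction Y with
  | nil => rfl
  | cons b Y ih => exact (nab_comm a b _).trans (congrArg (nab b) ih)

theorem nabL_partFn_of_pos (X : List (ZLat ι)) (φ : ZLat ι →+ ℝ) (hφ : ∀ a ∈ X, 0 < φ a) :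
    nabL X (partFn X) = delta0 := by
  induction X with
  | nil => exact partFn_nil
  | cons a Y ih =>
    have hnab : nab a (partFn (a :: Y)) = partFn Y := funext fun γ => by
      rw [nab, partFn_cons_of_finite (repSet_finite_of_pos _ φ hφ γ), add_sub_cancel_left]
    change nab a (nabL Y (partFn (a :: Y))) = delta0
    rw [nab_nabL, hnab, ih fun b hb => hφ b (List.mem_cons_of_mem a hb)]

omit [Fintype ι] in
theorem castV_eq_zero {a : ZLat ι} : castV a = 0 ↔ a = 0 := by
  simp [castV, funext_iff]

omit [Fintype ι] in
theorem PointedList.smul_eq_zero_of_sum_eq_zero {X : List (ZLat ι)} (hpt : PointedList X)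
    {t : Fin X.length → ℝ} (ht : ∀ i, 0 ≤ t i) (hsum : ∑ i, t i • castV (X.get i) = 0)
    (i : Fin X.length) : t i • castV (X.get i) = 0 := by
  refine hpt _ ⟨fun j => if j = i then t i else 0, fun j => ?_, ?_⟩
    ⟨fun j => t j - if j = i then t i else 0, fun j => ?_, ?_⟩
  · dsimp only
    split_ifs <;> simp [ht i]
  · simp [ite_smul]
  · dsimp only
    split_ifs with h <;> simp [h, ht j]
  · simp only [sub_smul, Finset.sum_sub_distrib, ite_smul, zero_smul, Finset.sum_ite_eq',
      Finset.mem_univ, if_true, hsum, zero_sub]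

theorem PointedList.exists_pos_functional {X : List (ZLat ι)} (hpt : PointedList X)
    (hX0 : ∀ a ∈ X, a ≠ 0) : ∃ f : Amb ι →L[ℝ] ℝ, ∀ a ∈ X, 0 < f (castV a) := by
  let L := Fintype.linearCombination ℝ fun i : Fin X.length => castV (X.get i)
  have hL : ∀ t, L t = ∑ i, t i • castV (X.get i) := Fintype.linearCombination_apply ℝ _
  -- `L '' stdSimplex` is the convex hull of the generators.
  have hK : (0 : Amb ι) ∉ L '' stdSimplex ℝ (Fin X.length) := by
    rintro ⟨t, ⟨ht, ht1⟩, h0⟩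
    obtain ⟨i, hi⟩ : ∃ i, 0 < t i := by
      by_contra! h
      simp [le_antisymm (h _) (ht _)] at ht1
    have := hpt.smul_eq_zero_of_sum_eq_zero ht ((hL t).symm.trans h0) i
    exact hX0 _ (X.get_mem i) (castV_eq_zero.1 (smul_eq_zero.1 this |>.resolve_left hi.ne'))
  obtain ⟨f, s, hf0, hfK⟩ := geometric_hahn_banach_point_closed
    ((convex_stdSimplex ℝ _).linear_image L)
    ((isCompact_stdSimplex ℝ _).image L.continuous_of_finiteDimensional).isClosed hK
  refine ⟨f, fun a ha => ?_⟩
  obtain ⟨i, rfl⟩ := List.mem_iff_get.1 ha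
  have := hfK _ ⟨_, single_mem_stdSimplex ℝ i, rfl⟩
  rw [Fintype.linearCombination_apply_single, one_smul] at this
  linarith [map_zero f]

theorem partFn_nabla_general {ι : Type*} [Fintype ι] (X : List (ZLat ι))
    (hX0 : ∀ a ∈ X, a ≠ 0) (hpt : PointedList X) :
    nabL X (partFn X) = delta0 := by
  obtain ⟨f, hf⟩ := hpt.exists_pos_functional hX0
  exact nabL_partFn_of_pos X
    (f.toLinearMap.toAddMonoidHom.comp ((Int.castAddHom ℝ).compLeft ι)) hf

/-- If `X` is a list of nonzero lattice vectors spanning `V` and generating a pointed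
cone, then the partition function satisfies `∇_X 𝓟_X = δ₀`. -/
theorem partFn_nabla {ι : Type*} [Fintype ι] (X : List (ZLat ι))
    (hX0 : ∀ a ∈ X, a ≠ 0) (hspan : spanOf X = ⊤) (hpt : PointedList X) :
    nabL X (partFn X) = delta0 :=
  partFn_nabla_general X hX0 hpt
end
end

section
/- If r is a rational subspace, F a regular face for X\r, and g a function supported on Γ ∩ r, then the convolution P_{X\r}^{F} * g is well-defined: for every γ ∈ Γ there are only finitely many pairs (λ, μ) with λ in the support of P_{X\r}^{F}, μ ∈ Γ ∩ r, and γ = λ + μ. -/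
open Function

attribute [local instance] Classical.propDecidable

noncomputable section

variable {ι : Type*} [Fintype ι]

/-! The regular vector `u` vanishes on `r` and is positive on every entry of `[A, -B]`.
Hence in a decomposition `γ = λ + μ` with `μ ∈ r` the value `⟨u, λ⟩ = ⟨u, γ⟩` is fixed, which
bounds the coefficients of every representation of `λ + ∑_{b∈B} b` as a nonnegative integral
combination of `[A, -B]`; so only finitely many `λ` occur, and `μ = γ - λ` is then determined. -/

theorem finite_setOf_sum_natCast_mul_le {σ : Type*} [Fintype σ] {w : σ → ℝ}
    (hw : ∀ i, 0 < w i) (c : ℝ) :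
    {k : σ → ℕ | ∑ i, (k i : ℝ) * w i ≤ c}.Finite := by
  refine (Set.Finite.pi fun i => Set.finite_Iic ⌊c / w i⌋₊).subset fun k hk i _ => ?_
  refine Nat.le_floor ((le_div_iff₀ (hw i)).mpr (le_trans ?_ hk))
  exact Finset.single_le_sum (fun j _ => mul_nonneg (Nat.cast_nonneg _) (hw j).le)
    (Finset.mem_univ i)

section PartFn

omit [Fintype ι]

theorem exists_sum_eq_of_mem_support_partFn {Y : List (ZLat ι)} {γ : ZLat ι}
    (hγ : γ ∈ support (partFn Y)) : ∃ k : Fin Y.length → ℕ, ∑ i, (k i : ℤ) • Y.get i = γ := by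
  by_contra! h
  have : IsEmpty {k : Fin Y.length → ℕ // ∑ i, (k i : ℤ) • Y.get i = γ} := ⟨fun k => h k.1 k.2⟩
  exact hγ (by rw [partFn, Nat.card_of_isEmpty, Nat.cast_zero])

theorem finite_setOf_mem_support_partFn_le {Y : List (ZLat ι)} (φ : ZLat ι →+ ℝ)
    (hφ : ∀ a ∈ Y, 0 < φ a) (c : ℝ) :
    {γ | γ ∈ support (partFn Y) ∧ φ γ ≤ c}.Finite := by
  have hpos : ∀ i, 0 < φ (Y.get i) := fun i => hφ _ (List.get_mem _ i)
  refine ((finite_setOf_sum_natCast_mul_le hpos c).image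
    fun k => ∑ i, (k i : ℤ) • Y.get i).subset ?_
  rintro γ ⟨hγ, hγc⟩
  obtain ⟨k, rfl⟩ := exists_sum_eq_of_mem_support_partFn hγ
  refine ⟨k, ?_, rfl⟩
  simp only [map_sum, map_zsmul] at hγc
  simpa only [Set.mem_ofPred_eq, zsmul_eq_mul, Int.cast_natCast] using hγc

end PartFn

def dotHom (u : Amb ι) : ZLat ι →+ ℝ :=
  AddMonoidHom.mk' (fun γ => dotR u (castV γ)) fun a b => by
    simp [dotR, castV, mul_add, Finset.sum_add_distrib]

theorem dotHom_apply (u : Amb ι) (γ : ZLat ι) : dotHom u γ = dotR u (castV γ) := rfl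

theorem dotHom_pos_of_mem_signedOut {X : List (ZLat ι)} {r : Submodule ℝ (Amb ι)} {u : Amb ι}
    (hu : Reg X r u) {a : ZLat ι} (ha : a ∈ signedOut X r u) : 0 < dotHom u a := by
  simp only [signedOut, outSub, List.mem_map, List.mem_filter, decide_eq_true_eq] at ha
  obtain ⟨b, ⟨hbX, hbr⟩, rfl⟩ := ha
  have hb := hu.2 b hbX hbr
  split_ifs with h
  · exact h
  · rw [map_neg, neg_pos, dotHom_apply]
    exact lt_of_le_of_ne (not_lt.mp h) hb

theorem finite_setOf_mem_support_PF_le {X : List (ZLat ι)} {r : Submodule ℝ (Amb ι)}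
    {u : Amb ι} (hu : Reg X r u) (c : ℝ) :
    {l | l ∈ support (PF X r u) ∧ dotHom u l ≤ c}.Finite := by
  set s := (negPart X r u).sum
  refine ((finite_setOf_mem_support_partFn_le (dotHom u)
    (fun a ha => dotHom_pos_of_mem_signedOut hu ha) (c + dotHom u s)).preimage
    (add_left_injective s).injOn).subset ?_
  rintro l ⟨hl, hlc⟩
  exact ⟨fun h => hl (mul_eq_zero_of_right _ h), by simpa using hlc⟩

theorem conv_welldef_general {ι : Type*} [Fintype ι] (X : List (ZLat ι))
    (r : Submodule ℝ (Amb ι)) (u : Amb ι) (hu : Reg X r u) :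
    ∀ γ : ZLat ι, Set.Finite {p : ZLat ι × ZLat ι |
      p.1 ∈ Function.support (PF X r u) ∧ castV p.2 ∈ r ∧ γ = p.1 + p.2} := by
  intro γ
  refine ((finite_setOf_mem_support_PF_le hu (dotHom u γ)).image fun l => (l, γ - l)).subset ?_
  rintro ⟨l, μ⟩ ⟨hl, hμ, rfl⟩
  have hμ0 : dotHom u μ = 0 := hu.1 _ hμ
  exact ⟨l, ⟨hl, by simp [hμ0]⟩, by simp⟩

/-- The convolution `𝓟_{X\r}^F * g` for `g` supported on `Γ ∩ r` is well defined: for each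
`γ ∈ Γ` there are only finitely many decompositions `γ = λ + μ` with `λ` in the support of
`𝓟_{X\r}^F` and `μ ∈ Γ ∩ r`. -/
theorem conv_welldef {ι : Type*} [Fintype ι] (X : List (ZLat ι))
    (hX0 : ∀ a ∈ X, a ≠ 0) (hspan : spanOf X = ⊤)
    (r : Submodule ℝ (Amb ι)) (hr : IsRational X r) (u : Amb ι) (hu : Reg X r u) :
    ∀ γ : ZLat ι, Set.Finite {p : ZLat ι × ZLat ι |
      p.1 ∈ Function.support (PF X r u) ∧ castV p.2 ∈ r ∧ γ = p.1 + p.2} :=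
  conv_welldef_general X r u hu
end
end

section
/- For rational subspaces r and t, and a regular face F for X\r, one has ∇_{(X\t)\r} P_{X\r}^{F} = P_{(X\r)∩t}^{F}, where on the right F denotes the induced regular face for (X∩t)\r. -/
open Function

attribute [local instance] Classical.propDecidable

noncomputable section

variable {ι : Type*} [Fintype ι]

/-!
Up to the sign `(-1)^|B|` and the shift by `∑ B`, `𝓟_{X\r}^F` is the partition function of the
list obtained from `X \ r` by flipping the entries on which `u` is negative; all its entries are
then positive on `u`, so every fibre of the partition function is finite. Splitting the
representations of `γ` by the multiplicity of one entry `a` (zero, or positive and then lowered by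
one) gives `∇ₐ 𝓟_{a :: Y} = 𝓟_Y`, for either sign of `⟨u, a⟩`. Since `X \ r` is a permutation of
`(X \ t) \ r ++ (X ∩ t) \ r` and the partition function only depends on the multiset of entries,
the operators `∇ₐ`, `a ∈ (X \ t) \ r`, peel these entries off one at a time.
-/

def List.Perm.idxEquiv {α : Type*} {Y Z : List α} (h : Y.Perm Z) : Fin Y.length ≃ Fin Z.length :=
  ⟨h.idxBij, h.symm.idxBij, h.idxBij_rightInverse_idxBij_symm,
    h.idxBij_leftInverse_idxBij_symm⟩

theorem List.Perm.getElem_idxEquiv {α : Type*} {Y Z : List α} (h : Y.Perm Z)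
    (i : Fin Y.length) : Z[(h.idxEquiv i : ℕ)] = Y[(i : ℕ)] :=
  h.getElem_idxBij_eq_getElem i

section

variable {G : Type*} [AddCommGroup G]

abbrev NatReprs (Y : List G) (γ : G) : Type :=
  {k : Fin Y.length → ℕ // ∑ i, (k i : ℤ) • Y.get i = γ}

namespace NatReprs

def consEquiv (a : G) (Y : List G) (γ : G) :
    NatReprs (a :: Y) γ ≃ Σ m : ℕ, NatReprs Y (γ - (m : ℤ) • a) where
  toFun k :=
    ⟨k.1 0, fun i => k.1 i.succ, eq_sub_of_add_eq' ((Fin.sum_univ_succ _).symm.trans k.2)⟩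
  invFun x := ⟨Fin.cons x.1 x.2.1, (Fin.sum_univ_succ _).trans (add_eq_of_eq_sub' x.2.2)⟩
  left_inv _ := Subtype.ext <| funext <| Fin.cases rfl fun _ => rfl
  right_inv _ := rfl

/-- The multiplicity of the head is either zero, or positive and can be lowered by one. -/
def consSplitEquiv (a : G) (Y : List G) (γ : G) :
    NatReprs (a :: Y) γ ≃ NatReprs Y γ ⊕ NatReprs (a :: Y) (γ - a) :=
  (consEquiv a Y γ).trans <| (Equiv.sigmaNatSucc _).trans <| Equiv.sumCongr
    (Equiv.cast (by simp))
    ((Equiv.sigmaCongrRight fun m => Equiv.cast (by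
      congr 1; push_cast; rw [add_smul, one_smul, sub_sub, add_comm])).trans
      (consEquiv a Y (γ - a)).symm)

def equivOfPerm {Y Z : List G} (h : Y.Perm Z) (γ : G) : NatReprs Y γ ≃ NatReprs Z γ :=
  Equiv.subtypeEquiv (h.idxEquiv.arrowCongr (Equiv.refl ℕ)) fun k => by
    rw [← h.idxEquiv.sum_comp]
    simp [h.getElem_idxEquiv]

/-- `Nat.card` of an infinite type is `0`, so `card_cons` needs these fibres to be finite; this is
where the regularity of `u` enters. -/
theorem finite_of_pos (φ : G →+ ℝ) {Y : List G} (hY : ∀ a ∈ Y, 0 < φ a) (γ : G) :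
    Finite (NatReprs Y γ) := by
  have hpos : ∀ j, 0 < φ (Y.get j) := fun j => hY _ (List.get_mem _ _)
  suffices {k : Fin Y.length → ℕ | ∑ i, (k i : ℤ) • Y.get i = γ} ⊆
      Set.univ.pi fun j => Set.Iic ⌊φ γ / φ (Y.get j)⌋₊ from
    ((Set.Finite.pi fun _ => Set.finite_Iic _).subset this).to_subtype
  intro k (hk : _ = γ) j _
  have hφγ : φ γ = ∑ i, (k i : ℝ) * φ (Y.get i) := by
    simp [← hk, map_sum]
  have hj : (k j : ℝ) * φ (Y.get j) ≤ φ γ := hφγ ▸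
    Finset.single_le_sum (f := fun i => (k i : ℝ) * φ (Y.get i))
      (fun i _ => mul_nonneg (Nat.cast_nonneg _) (hpos i).le) (Finset.mem_univ j)
  exact Nat.le_floor ((le_div_iff₀ (hpos j)).2 hj)

theorem card_cons (φ : G →+ ℝ) {a : G} {Y : List G} (hY : ∀ b ∈ a :: Y, 0 < φ b) (γ : G) :
    Nat.card (NatReprs (a :: Y) γ) =
      Nat.card (NatReprs Y γ) + Nat.card (NatReprs (a :: Y) (γ - a)) := by
  have := finite_of_pos φ hY (γ - a)
  have := finite_of_pos φ (fun b hb => hY b (List.mem_cons_of_mem a hb)) γ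
  rw [Nat.card_congr (consSplitEquiv a Y γ), Nat.card_sum]

end NatReprs

end

section LatticeFunctions

variable {ι : Type*}

theorem partFn_perm {Y Z : List (ZLat ι)} (h : Y.Perm Z) : partFn Y = partFn Z :=
  funext fun γ => congrArg Nat.cast (Nat.card_congr (NatReprs.equivOfPerm h γ))

theorem nab_partFn_cons (φ : ZLat ι →+ ℝ) {a : ZLat ι} {Y : List (ZLat ι)}
    (hY : ∀ b ∈ a :: Y, 0 < φ b) : nab a (partFn (a :: Y)) = partFn Y := by
  funext γ
  change (Nat.card (NatReprs (a :: Y) γ) : ℤ) - Nat.card (NatReprs (a :: Y) (γ - a)) =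
    Nat.card (NatReprs Y γ)
  rw [NatReprs.card_cons φ hY γ]
  push_cast
  ring

def orient (φ : ZLat ι →+ ℝ) (a : ZLat ι) : ZLat ι := if 0 < φ a then a else -a

theorem orient_pos {φ : ZLat ι →+ ℝ} {a : ZLat ι} (ha : φ a ≠ 0) : 0 < φ (orient φ a) := by
  unfold orient
  split_ifs with h
  · exact h
  · rw [map_neg, neg_pos]
    exact lt_of_le_of_ne (not_lt.1 h) ha

def signedPF (φ : ZLat ι →+ ℝ) (L : List (ZLat ι)) : ZLat ι → ℤ := fun γ =>
  (-1) ^ (L.filter (fun a => decide (φ a < 0))).length *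
    partFn (L.map (orient φ)) (γ + (L.filter (fun a => decide (φ a < 0))).sum)

theorem signedPF_perm (φ : ZLat ι →+ ℝ) {L L' : List (ZLat ι)} (h : L.Perm L') :
    signedPF φ L = signedPF φ L' := by
  have hneg := h.filter (fun a => decide (φ a < 0))
  funext γ
  rw [signedPF, signedPF, hneg.length_eq, hneg.sum_eq, partFn_perm (h.map _)]

theorem nab_signedPF_cons_of_pos {φ : ZLat ι →+ ℝ} {a : ZLat ι} {L : List (ZLat ι)}
    (ha : 0 < φ a) (hL : ∀ b ∈ L, φ b ≠ 0) : nab a (signedPF φ (a :: L)) = signedPF φ L := by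
  have hfilter : (a :: L).filter (fun b => decide (φ b < 0)) =
      L.filter (fun b => decide (φ b < 0)) :=
    List.filter_cons_of_neg (by simpa using ha.le)
  have hpos : ∀ b ∈ a :: L.map (orient φ), 0 < φ b := by
    simp only [List.mem_cons, List.mem_map]
    rintro _ (rfl | ⟨b, hb, rfl⟩)
    exacts [ha, orient_pos (hL b hb)]
  funext γ
  simp only [nab, signedPF, hfilter, List.map_cons, orient, if_pos ha]
  generalize (L.filter fun b => decide (φ b < 0)).sum = B
  have hP := congrFun (nab_partFn_cons φ hpos) (γ + B)
  rw [nab] at hP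
  rw [show γ - a + B = γ + B - a by abel]
  linear_combination (-1) ^ (L.filter fun b => decide (φ b < 0)).length * hP

/-- Here `a` enters flipped to `-a`, with an extra sign and a shift by `a`;
`∇ₐ f (x + a) = -∇₋ₐ f x` cancels both. -/
theorem nab_signedPF_cons_of_neg {φ : ZLat ι →+ ℝ} {a : ZLat ι} {L : List (ZLat ι)}
    (ha : φ a < 0) (hL : ∀ b ∈ L, φ b ≠ 0) : nab a (signedPF φ (a :: L)) = signedPF φ L := by
  have hfilter : (a :: L).filter (fun b => decide (φ b < 0)) =
      a :: L.filter (fun b => decide (φ b < 0)) :=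
    List.filter_cons_of_pos (decide_eq_true ha)
  have horient : orient φ a = -a := if_neg (asymm ha)
  have hpos : ∀ b ∈ -a :: L.map (orient φ), 0 < φ b := by
    simp only [List.mem_cons, List.mem_map]
    rintro _ (rfl | ⟨b, hb, rfl⟩)
    exacts [by simpa using ha, orient_pos (hL b hb)]
  funext γ
  simp only [nab, signedPF, hfilter, List.map_cons, horient, List.length_cons, List.sum_cons]
  generalize (L.filter fun b => decide (φ b < 0)).sum = B
  have hP := congrFun (nab_partFn_cons φ hpos) (γ + B)
  rw [nab, sub_neg_eq_add] at hP
  rw [show γ - a + (a + B) = γ + B by abel, show γ + (a + B) = γ + B + a by abel]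
  linear_combination (-1) ^ (L.filter fun b => decide (φ b < 0)).length * hP

theorem nab_signedPF_cons {φ : ZLat ι →+ ℝ} {a : ZLat ι} {L : List (ZLat ι)} (ha : φ a ≠ 0)
    (hL : ∀ b ∈ L, φ b ≠ 0) : nab a (signedPF φ (a :: L)) = signedPF φ L :=
  ha.lt_or_gt.elim (nab_signedPF_cons_of_neg · hL) (nab_signedPF_cons_of_pos · hL)

theorem nabL_signedPF_append {φ : ZLat ι →+ ℝ} {M L : List (ZLat ι)}
    (hML : ∀ a ∈ M ++ L, φ a ≠ 0) : nabL M (signedPF φ (M ++ L)) = signedPF φ L := by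
  induction M generalizing L with
  | nil => rfl
  | cons a M ih =>
    have hperm : (a :: M ++ L).Perm (M ++ a :: L) := List.perm_middle.symm
    have hML' : ∀ b ∈ M ++ a :: L, φ b ≠ 0 := fun b hb => hML b (hperm.symm.subset hb)
    calc nabL (a :: M) (signedPF φ (a :: M ++ L))
        = nab a (nabL M (signedPF φ (M ++ a :: L))) := by rw [signedPF_perm φ hperm]; rfl
      _ = nab a (signedPF φ (a :: L)) := by rw [ih hML']
      _ = signedPF φ L :=
        nab_signedPF_cons (hML' a (by simp)) fun b hb => hML' b (by simp [hb])

theorem nabL_filter_signedPF {φ : ZLat ι →+ ℝ} {L : List (ZLat ι)} (hL : ∀ a ∈ L, φ a ≠ 0)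
    (p : ZLat ι → Bool) :
    nabL (L.filter p) (signedPF φ L) = signedPF φ (L.filter fun a => !p a) := by
  have hperm := List.filter_append_perm p L
  rw [← signedPF_perm φ hperm]
  exact nabL_signedPF_append fun a ha => hL a (hperm.subset ha)

theorem outSub_outSub_comm (X : List (ZLat ι)) (r t : Submodule ℝ (Amb ι)) :
    outSub (outSub X t) r = outSub (outSub X r) t := by
  simp only [outSub, List.filter_filter, Bool.and_comm]

theorem outSub_inSub_comm (X : List (ZLat ι)) (r t : Submodule ℝ (Amb ι)) :
    outSub (inSub X t) r = inSub (outSub X r) t := by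
  simp only [outSub, inSub, List.filter_filter, Bool.and_comm]

end LatticeFunctions

def pairing (u : Amb ι) : ZLat ι →+ ℝ where
  toFun a := dotR u (castV a)
  map_zero' := by simp [dotR, castV]
  map_add' a b := by simp [dotR, castV, mul_add, Finset.sum_add_distrib]

theorem PF_eq_signedPF (X : List (ZLat ι)) (r : Submodule ℝ (Amb ι)) (u : Amb ι) :
    PF X r u = signedPF (pairing u) (outSub X r) :=
  rfl

theorem nab_PF_restrict_general {ι : Type*} [Fintype ι] (X : List (ZLat ι))
    (r t : Submodule ℝ (Amb ι))
    (u : Amb ι) (hu : Reg X r u) :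
    nabL (outSub (outSub X t) r) (PF X r u) = PF (inSub X t) r u := by
  have hreg : ∀ a ∈ outSub X r, pairing u a ≠ 0 := fun a ha =>
    hu.2 a (List.mem_filter.1 ha).1 (by simpa using (List.mem_filter.1 ha).2)
  have hin : inSub (outSub X r) t = (outSub X r).filter fun a => !decide (castV a ∉ t) := by
    simp [inSub]
  rw [PF_eq_signedPF, PF_eq_signedPF, outSub_outSub_comm, outSub_inSub_comm, hin]
  exact nabL_filter_signedPF hreg _

/-- `∇_{(X\t)\r} 𝓟_{X\r}^F = 𝓟_{(X\r)∩t}^F`, the latter for the induced regular face of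
`(X ∩ t) \ r`. -/
theorem nab_PF_restrict {ι : Type*} [Fintype ι] (X : List (ZLat ι))
    (hX0 : ∀ a ∈ X, a ≠ 0) (hspan : spanOf X = ⊤)
    (r t : Submodule ℝ (Amb ι)) (hr : IsRational X r) (ht : IsRational X t)
    (u : Amb ι) (hu : Reg X r u) :
    nabL (outSub (outSub X t) r) (PF X r u) = PF (inSub X t) r u :=
  nab_PF_restrict_general X r t u hu
end
end

section
/- For Γ = ℤω and X = [2ω, -ω], the space F(X) is a free ℤ-module of rank 4 with basis θ₁(n)=1, θ₂(n)=n, θ₃(n)=n/2+(1-(-1)ⁿ)/4, and θ₄(n)=θ₃(n)·[n≥0]; moreover θ₁, θ₂, θ₃ form a ℤ-basis of DM(X). -/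
noncomputable section

/-- The difference operator `∇ₐ` on functions `ℤ → ℤ`. -/
def nab1 (a : ℤ) (f : ℤ → ℤ) : ℤ → ℤ := fun n => f n - f (n - a)

/-- The space `𝓕(X)` for `Γ = ℤω`, `X = [2ω, -ω]`: the only nontrivial condition
(for the rational subspace `r = {0}`) is that `∇_{2ω}∇_{-ω} f` is supported at `0`. -/
def memFX (f : ℤ → ℤ) : Prop := ∀ n : ℤ, n ≠ 0 → nab1 2 (nab1 (-1) f) n = 0

/-- The Dahmen–Micchelli space `DM(X)` for `X = [2ω, -ω]`: `∇_{2ω}∇_{-ω} f = 0`. -/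
def memDMX (f : ℤ → ℤ) : Prop := ∀ n : ℤ, nab1 2 (nab1 (-1) f) n = 0

def θ₁ : ℤ → ℤ := fun _ => 1
def θ₂ : ℤ → ℤ := fun n => n
/-- `θ₃(n) = n/2 + (1-(-1)ⁿ)/4`, i.e. `n/2` for even `n` and `(n+1)/2` for odd `n`. -/
def θ₃ : ℤ → ℤ := fun n => if Even n then n / 2 else (n + 1) / 2
def θ₄ : ℤ → ℤ := fun n => if 0 ≤ n then θ₃ n else 0


/-!
`∇₂∇₋₁ f (n) = f n - f (n+1) - f (n-2) + f (n-1)`, so membership in `𝓕(X)` is a third-order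
linear recurrence valid at every `n ≠ 0`. Propagating it upwards from `n = 1` and downwards
from `n = -1` shows that an element of `𝓕(X)` is determined by its values at `-2, -1, 0, 1`;
the `θᵢ` lie in `𝓕(X)` and their values there form a unimodular matrix, so they are a
`ℤ`-basis. Finally `DM(X)` is cut out of `𝓕(X)` by `∇₂∇₋₁ f (0) = 0`, which is minus the
`θ₄`-coordinate.
-/

lemma nab1_nab1_apply (f : ℤ → ℤ) (n : ℤ) :
    nab1 2 (nab1 (-1) f) n = f n - f (n + 1) - f (n - 2) + f (n - 1) := by
  simp only [nab1, sub_neg_eq_add]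
  ring_nf

lemma eq_zero_of_nab1_nab1_eq_zero_of_le {d : ℤ → ℤ} {k : ℤ}
    (hD : ∀ n, k ≤ n → nab1 2 (nab1 (-1) d) n = 0)
    (hm2 : d (k - 2) = 0) (hm1 : d (k - 1) = 0) (h0 : d k = 0) :
    ∀ n, k - 2 ≤ n → d n = 0 := by
  have window : ∀ n, k ≤ n → d (n - 2) = 0 ∧ d (n - 1) = 0 ∧ d n = 0 := by
    intro n hn
    induction n, hn using Int.leInduction with
    | base => exact ⟨hm2, hm1, h0⟩
    | succ n hkn ih =>
      obtain ⟨hn2, hn1, hn0⟩ := ih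
      have hrec := nab1_nab1_apply d n ▸ hD n hkn
      refine ⟨by rwa [show n + 1 - 2 = n - 1 by ring], by rwa [add_sub_cancel_right],
        by linarith⟩
  intro n hn
  simpa using (window (n + 2) (by omega)).1

lemma eq_zero_of_nab1_nab1_eq_zero_of_ge {d : ℤ → ℤ} {k : ℤ}
    (hD : ∀ n, n ≤ k → nab1 2 (nab1 (-1) d) n = 0)
    (hm1 : d (k - 1) = 0) (h0 : d k = 0) (h1 : d (k + 1) = 0) :
    ∀ n, n ≤ k + 1 → d n = 0 := by
  have window : ∀ n, n ≤ k → d (n - 1) = 0 ∧ d n = 0 ∧ d (n + 1) = 0 := by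
    intro n hn
    induction n, hn using Int.leInductionDown with
    | base => exact ⟨hm1, h0, h1⟩
    | pred n hnk ih =>
      obtain ⟨hn1, hn0, hnp1⟩ := ih
      have hrec := nab1_nab1_apply d n ▸ hD n hnk
      refine ⟨by rw [show n - 1 - 1 = n - 2 by ring]; linarith, hn1, by rwa [sub_add_cancel]⟩
  intro n hn
  simpa using (window (n - 1) (by omega)).2.2

lemma memFX_sub {f g : ℤ → ℤ} (hf : memFX f) (hg : memFX g) : memFX (f - g) := by
  intro n hn
  have hfn := nab1_nab1_apply f n ▸ hf n hn
  have hgn := nab1_nab1_apply g n ▸ hg n hn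
  rw [nab1_nab1_apply]
  simp only [Pi.sub_apply]
  linarith

lemma memFX.eq_zero {d : ℤ → ℤ} (hd : memFX d)
    (hm2 : d (-2) = 0) (hm1 : d (-1) = 0) (h0 : d 0 = 0) (h1 : d 1 = 0) : d = 0 := by
  have up := eq_zero_of_nab1_nab1_eq_zero_of_le (k := 1) (fun n hn => hd n (by omega))
    (by simpa using hm1) (by simpa using h0) h1
  have down := eq_zero_of_nab1_nab1_eq_zero_of_ge (k := -1) (fun n hn => hd n (by omega))
    (by simpa using hm2) hm1 (by simpa using h0)
  funext n
  rcases le_or_gt n 0 with hn | hn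
  · exact down n (by omega)
  · exact up n (by omega)

@[simp] lemma θ₃_neg_two : θ₃ (-2) = -1 := by norm_num [θ₃]
@[simp] lemma θ₃_neg_one : θ₃ (-1) = 0 := by norm_num [θ₃]
@[simp] lemma θ₃_zero : θ₃ 0 = 0 := by norm_num [θ₃]
@[simp] lemma θ₃_one : θ₃ 1 = 1 := by norm_num [θ₃, Int.even_iff]

@[simp] lemma θ₄_neg_two : θ₄ (-2) = 0 := by norm_num [θ₄]
@[simp] lemma θ₄_neg_one : θ₄ (-1) = 0 := by norm_num [θ₄]
@[simp] lemma θ₄_zero : θ₄ 0 = 0 := by norm_num [θ₄]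
@[simp] lemma θ₄_one : θ₄ 1 = 1 := by norm_num [θ₄]

lemma nab1_nab1_θ₃ (n : ℤ) : nab1 2 (nab1 (-1) θ₃) n = 0 := by
  rw [nab1_nab1_apply]
  simp only [θ₃, Int.even_iff]
  split_ifs <;> omega

lemma nab1_nab1_θ₄ (n : ℤ) : nab1 2 (nab1 (-1) θ₄) n = if n = 0 then -1 else 0 := by
  rw [nab1_nab1_apply]
  simp only [θ₄, θ₃, Int.even_iff]
  split_ifs <;> omega

def combFX (c : ℤ × ℤ × ℤ × ℤ) : ℤ → ℤ :=
  fun n => c.1 * θ₁ n + c.2.1 * θ₂ n + c.2.2.1 * θ₃ n + c.2.2.2 * θ₄ n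

def combDMX (c : ℤ × ℤ × ℤ) : ℤ → ℤ :=
  fun n => c.1 * θ₁ n + c.2.1 * θ₂ n + c.2.2 * θ₃ n

-- Inverts the values of `combFX c` at `0, -1, -2, 1`.
def coordsFX (f : ℤ → ℤ) : ℤ × ℤ × ℤ × ℤ :=
  (f 0, f 0 - f (-1), -f 0 + 2 * f (-1) - f (-2), f 1 - f 0 - f (-1) + f (-2))

def coordsDMX (f : ℤ → ℤ) : ℤ × ℤ × ℤ :=
  (f 0, f 0 - f (-1), -f 0 + 2 * f (-1) - f (-2))

lemma combDMX_eq_combFX (c : ℤ × ℤ × ℤ) : combDMX c = combFX (c.1, c.2.1, c.2.2, 0) := by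
  funext n
  simp [combDMX, combFX]

lemma nab1_nab1_combFX (c : ℤ × ℤ × ℤ × ℤ) (n : ℤ) :
    nab1 2 (nab1 (-1) (combFX c)) n = c.2.2.2 * nab1 2 (nab1 (-1) θ₄) n := by
  have h₃ := nab1_nab1_apply θ₃ n ▸ nab1_nab1_θ₃ n
  simp only [nab1_nab1_apply, combFX, θ₁, θ₂]
  linear_combination c.2.2.1 * h₃

lemma memFX_combFX (c : ℤ × ℤ × ℤ × ℤ) : memFX (combFX c) := by
  intro n hn
  simp [nab1_nab1_combFX, nab1_nab1_θ₄, hn]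

lemma memDMX_combDMX (c : ℤ × ℤ × ℤ) : memDMX (combDMX c) := by
  intro n
  simp [combDMX_eq_combFX, nab1_nab1_combFX]

lemma coordsFX_combFX (c : ℤ × ℤ × ℤ × ℤ) : coordsFX (combFX c) = c := by
  obtain ⟨a, b, c, e⟩ := c
  simp only [coordsFX, combFX, θ₁, θ₂, θ₃_neg_two, θ₃_neg_one, θ₃_zero, θ₃_one, θ₄_neg_two,
    θ₄_neg_one, θ₄_zero, θ₄_one, Prod.mk.injEq]
  omega

lemma coordsDMX_combDMX (c : ℤ × ℤ × ℤ) : coordsDMX (combDMX c) = c := by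
  obtain ⟨a, b, c⟩ := c
  simp only [coordsDMX, combDMX, θ₁, θ₂, θ₃_neg_two, θ₃_neg_one, θ₃_zero, Prod.mk.injEq]
  omega

lemma combFX_coordsFX {f : ℤ → ℤ} (hf : memFX f) : combFX (coordsFX f) = f := by
  have hzero := (memFX_sub (memFX_combFX (coordsFX f)) hf).eq_zero
  simp only [Pi.sub_apply, combFX, coordsFX, θ₁, θ₂, θ₃_neg_two, θ₃_neg_one, θ₃_zero, θ₃_one,
    θ₄_neg_two, θ₄_neg_one, θ₄_zero, θ₄_one] at hzero
  exact sub_eq_zero.mp (hzero (by ring) (by ring) (by ring) (by ring))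

lemma combDMX_coordsDMX {f : ℤ → ℤ} (hf : memDMX f) : combDMX (coordsDMX f) = f := by
  have hθ₄ : (coordsFX f).2.2.2 = 0 := by
    have := nab1_nab1_apply f 0 ▸ hf 0
    simp only [coordsFX]
    norm_num at this
    linarith
  rw [combDMX_eq_combFX, ← hθ₄]
  exact combFX_coordsFX fun n _ => hf n

/-- For `Γ = ℤω` and `X = [2ω, -ω]`, `𝓕(X)` is a free `ℤ`-module of rank `4` with basis
`θ₁, θ₂, θ₃, θ₄`, and `θ₁, θ₂, θ₃` form a `ℤ`-basis of `DM(X)`. -/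
theorem example_rank_one :
    (∀ f : ℤ → ℤ, memFX f ↔ ∃! c : ℤ × ℤ × ℤ × ℤ,
      f = fun n => c.1 * θ₁ n + c.2.1 * θ₂ n + c.2.2.1 * θ₃ n + c.2.2.2 * θ₄ n) ∧
    (∀ f : ℤ → ℤ, memDMX f ↔ ∃! c : ℤ × ℤ × ℤ,
      f = fun n => c.1 * θ₁ n + c.2.1 * θ₂ n + c.2.2 * θ₃ n) := by
  refine ⟨fun f => ⟨fun hf => ?_, ?_⟩, fun f => ⟨fun hf => ?_, ?_⟩⟩
  · exact ⟨coordsFX f, (combFX_coordsFX hf).symm,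
      fun c hc => by rw [hc]; exact (coordsFX_combFX c).symm⟩
  · rintro ⟨c, rfl, -⟩
    exact memFX_combFX c
  · exact ⟨coordsDMX f, (combDMX_coordsDMX hf).symm,
      fun c hc => by rw [hc]; exact (coordsDMX_combDMX c).symm⟩
  · rintro ⟨c, rfl, -⟩
    exact memDMX_combDMX c
end
end
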